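/- arXiv:2210.02410 — 2 statements merged into one kernel-verified Lean document; each statement's English description precedes it below -/
import Mathlib

section
/- Identical-elements invariance: Let x_1,...,x_n have feature maps φ(x_i) ∈ ℝ^d with unit norm, kernel k(x_i,x_j) = ⟨φ(x_i),φ(x_j)⟩, and probability weights p. Suppose φ(x_i) = φ(x_j) for some i ≠ j. Let p' be obtained from p by setting p'_i = p_i + p_j and p'_j = 0 (other entries unchanged). Then the weighted covariance matrices Σ_p = Σ_k p_k φ(x_k)φ(x_k)ᵀ and Σ_{p'} coincide, hence the probability-weighted Vendi Scores are equal. -/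
/-!
With `B` the `d × n` matrix whose `k`-th column is `√(p k) φ(x_k)`, the Vendi matrix is
`diag(√p) K diag(√p) = Bᵀ B` and the covariance is `Σ_p = B Bᵀ`. Since
`X ^ d * χ(Bᵀ B) = X ^ n * χ(B Bᵀ)`, equal covariances force equal characteristic polynomials of
the Vendi matrices, hence equal eigenvalues and equal scores. Merging the masses of two identical
feature vectors leaves each entry of `Σ_p` unchanged.
-/

open Matrix

theorem Matrix.charpoly_mul_eq_of_mul_eq {R m n : Type*} [CommRing R] [Fintype m] [Fintype n]
    [DecidableEq m] [DecidableEq n] {A A' : Matrix m n R} {B B' : Matrix n m R}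
    (h : A * B = A' * B') : (B * A).charpoly = (B' * A').charpoly :=
  (Polynomial.isRegular_X_pow (Fintype.card m)).left <| by
    dsimp only
    rw [← charpoly_mul_comm' A B, ← charpoly_mul_comm' A' B', h]

theorem Fintype.sum_smul_merge {ι R M : Type*} [Fintype ι] [DecidableEq ι] [Semiring R]
    [AddCommMonoid M] [Module R M] {v : ι → M} {q q' : ι → R} {i j : ι} (hij : i ≠ j)
    (hv : v i = v j) (hq'i : q' i = q i + q j) (hq'j : q' j = 0)
    (hq' : ∀ k, k ≠ i → k ≠ j → q' k = q k) :
    ∑ k, q' k • v k = ∑ k, q k • v k := by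
  have hj : j ∈ Finset.univ.erase i := Finset.mem_erase.2 ⟨hij.symm, Finset.mem_univ j⟩
  simp only [← Finset.add_sum_erase _ _ (Finset.mem_univ i), ← Finset.add_sum_erase _ _ hj]
  have hrest : ∑ k ∈ (Finset.univ.erase i).erase j, q' k • v k =
      ∑ k ∈ (Finset.univ.erase i).erase j, q k • v k :=
    Finset.sum_congr rfl fun k hk => by
      obtain ⟨hkj, hki, -⟩ := by simpa only [Finset.mem_erase] using hk
      rw [hq' k hki hkj]
  rw [hrest, hq'i, hq'j, hv, add_smul, zero_smul, zero_add, add_assoc]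

section WeightedFeatureMatrix

variable {ι α : Type*} [Fintype ι]

noncomputable def weightedFeatureMatrix (φ : ι → α → ℝ) (q : ι → ℝ) : Matrix α ι ℝ :=
  of fun a k => Real.sqrt (q k) * φ k a

theorem diagonal_sqrt_mul_mul_diagonal_sqrt [DecidableEq ι] [Fintype α] (φ : ι → α → ℝ)
    {K : Matrix ι ι ℝ} (hK : ∀ k l, K k l = ∑ a, φ k a * φ l a) (q : ι → ℝ) :
    diagonal (fun k => Real.sqrt (q k)) * K * diagonal (fun k => Real.sqrt (q k)) =
      (weightedFeatureMatrix φ q)ᵀ * weightedFeatureMatrix φ q := by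
  ext k l
  rw [mul_diagonal, diagonal_mul, hK, mul_apply, Finset.mul_sum, Finset.sum_mul]
  exact Finset.sum_congr rfl fun a _ => by
    simp only [transpose_apply, weightedFeatureMatrix, of_apply]
    ring

theorem weightedFeatureMatrix_mul_transpose (φ : ι → α → ℝ) {q : ι → ℝ} (hq : 0 ≤ q) :
    weightedFeatureMatrix φ q * (weightedFeatureMatrix φ q)ᵀ =
      of fun a b => ∑ k, q k * (φ k a * φ k b) := by
  ext a b
  simp only [mul_apply, transpose_apply, weightedFeatureMatrix, of_apply]
  exact Finset.sum_congr rfl fun k _ => by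
    linear_combination (φ k a * φ k b) * Real.mul_self_sqrt (hq k)

end WeightedFeatureMatrix

theorem vendi_score_identical_elements_general
    {n d : ℕ} (φ : Fin n → Fin d → ℝ)
    (K : Matrix (Fin n) (Fin n) ℝ) (hKdef : ∀ i j, K i j = ∑ a, φ i a * φ j a)
    (p p' : Fin n → ℝ) (hp : ∀ k, 0 ≤ p k)
    (i j : Fin n) (hij : i ≠ j) (hsame : φ i = φ j)
    (hp'i : p' i = p i + p j) (hp'j : p' j = 0)
    (hp'other : ∀ k, k ≠ i → k ≠ j → p' k = p k)
    (hH : (Matrix.diagonal (fun k => Real.sqrt (p k)) * K *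
            Matrix.diagonal (fun k => Real.sqrt (p k))).IsHermitian)
    (hH' : (Matrix.diagonal (fun k => Real.sqrt (p' k)) * K *
            Matrix.diagonal (fun k => Real.sqrt (p' k))).IsHermitian) :
    (Matrix.of fun a b => ∑ k, p k * (φ k a * φ k b)) =
        (Matrix.of fun a b => ∑ k, p' k * (φ k a * φ k b)) ∧
      Real.exp (-∑ k, hH.eigenvalues k * Real.log (hH.eigenvalues k)) =
        Real.exp (-∑ k, hH'.eigenvalues k * Real.log (hH'.eigenvalues k)) := by
  have hp'_nonneg : 0 ≤ p' := fun k => by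
    rcases eq_or_ne k i with rfl | hki
    · exact hp'i ▸ add_nonneg (hp k) (hp j)
    rcases eq_or_ne k j with rfl | hkj
    · exact hp'j.ge
    · exact hp'other k hki hkj ▸ hp k
  have hcov : (of fun a b => ∑ k, p k * (φ k a * φ k b)) =
      of fun a b => ∑ k, p' k * (φ k a * φ k b) := by
    ext a b
    exact (Fintype.sum_smul_merge (v := fun k => φ k a * φ k b) hij (by rw [hsame])
      hp'i hp'j hp'other).symm
  have heig : hH.eigenvalues = hH'.eigenvalues := by
    rw [hH.eigenvalues_eq_eigenvalues_iff hH', diagonal_sqrt_mul_mul_diagonal_sqrt φ hKdef,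
      diagonal_sqrt_mul_mul_diagonal_sqrt φ hKdef]
    refine charpoly_mul_eq_of_mul_eq ?_
    rw [weightedFeatureMatrix_mul_transpose φ hp, weightedFeatureMatrix_mul_transpose φ hp'_nonneg,
      hcov]
  exact ⟨hcov, by rw [heig]⟩

/-- Identical-elements invariance. If two elements have identical unit-norm
feature vectors and their probability masses are merged, the weighted covariance matrix
`Σ_p = ∑ k, p k • φ k φ kᵀ` is unchanged, and hence the probability-weighted Vendi Score
(computed from `diag(√p) K diag(√p)` with `K` the Gram matrix) is unchanged. -/
theorem vendi_score_identical_elements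
    {n d : ℕ} (φ : Fin n → Fin d → ℝ) (hφ : ∀ k, ∑ a, φ k a ^ 2 = 1)
    (K : Matrix (Fin n) (Fin n) ℝ) (hKdef : ∀ i j, K i j = ∑ a, φ i a * φ j a)
    (p p' : Fin n → ℝ) (hp : ∀ k, 0 ≤ p k) (hpsum : ∑ k, p k = 1)
    (i j : Fin n) (hij : i ≠ j) (hsame : φ i = φ j)
    (hp'i : p' i = p i + p j) (hp'j : p' j = 0)
    (hp'other : ∀ k, k ≠ i → k ≠ j → p' k = p k)
    (hH : (Matrix.diagonal (fun k => Real.sqrt (p k)) * K *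
            Matrix.diagonal (fun k => Real.sqrt (p k))).IsHermitian)
    (hH' : (Matrix.diagonal (fun k => Real.sqrt (p' k)) * K *
            Matrix.diagonal (fun k => Real.sqrt (p' k))).IsHermitian) :
    (Matrix.of fun a b => ∑ k, p k * (φ k a * φ k b)) =
        (Matrix.of fun a b => ∑ k, p' k * (φ k a * φ k b)) ∧
      Real.exp (-∑ k, hH.eigenvalues k * Real.log (hH.eigenvalues k)) =
        Real.exp (-∑ k, hH'.eigenvalues k * Real.log (hH'.eigenvalues k)) :=
  vendi_score_identical_elements_general φ K hKdef p p' hp i j hij hsame hp'i hp'j hp'other hH hH'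
end

section
/- Partitioning identity for the Vendi Score: with the hypotheses of the block-diagonal setting (M block diagonal with blocks p_i M_i, M_i PSD unit trace, p a probability vector), exp(H_vN(M)) = exp(H(p)) · Π_{i=1}^m exp(H_vN(M_i))^{p_i}, i.e., the Vendi Score of the combined sample is the exponential of the mixing entropy times the weighted geometric mean of the component Vendi Scores. -/
/-!
The eigenvalues of a block-diagonal Hermitian matrix are, with multiplicity, those of its blocks
(its characteristic polynomial is the product of theirs), so the spectrum of the combined matrix
is `{p i * λ i j}`. Since `-xy log(xy) = y (-x log x) + x (-y log y)` and `∑ j, λ i j = tr M i = 1`,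
its von Neumann entropy splits as `H(p) + ∑ i, p i * H_vN(M i)`; exponentiating gives the identity.
-/

open Matrix Polynomial

namespace Matrix

section BlockDiagonal
variable {ι R : Type*} [Fintype ι] [DecidableEq ι] {n : ι → Type*} [∀ i, Fintype (n i)]
  [∀ i, DecidableEq (n i)] [CommRing R]

theorem det_blockDiagonal' (A : ∀ i, Matrix (n i) (n i) R) :
    (blockDiagonal' A).det = ∏ i, (A i).det := by
  -- any linear order on the blocks makes a block-diagonal matrix block-triangular
  let : LinearOrder ι := LinearOrder.lift' _ (Fintype.equivFin ι).injective
  rw [(blockTriangular_blockDiagonal' A).det_fintype]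
  refine Finset.prod_congr rfl fun k _ => ?_
  rw [← det_submatrix_equiv_self (Equiv.sigmaSubtype k).symm]
  congr 1
  ext i j
  simp [toSquareBlock_def, Equiv.sigmaSubtype, blockDiagonal'_apply_eq]

theorem charmatrix_blockDiagonal' (A : ∀ i, Matrix (n i) (n i) R) :
    charmatrix (blockDiagonal' A) = blockDiagonal' fun i => charmatrix (A i) := by
  simp only [charmatrix, scalar_apply, RingHom.mapMatrix_apply,
    blockDiagonal'_map _ _ (map_zero C)]
  rw [← blockDiagonal'_diagonal fun _ _ => X]
  exact (blockDiagonal'_sub _ _).symm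

theorem charpoly_blockDiagonal' (A : ∀ i, Matrix (n i) (n i) R) :
    (blockDiagonal' A).charpoly = ∏ i, (A i).charpoly := by
  rw [charpoly, charmatrix_blockDiagonal', det_blockDiagonal']
  rfl

end BlockDiagonal

namespace IsHermitian
variable {𝕜 : Type*} [RCLike 𝕜]

section
variable {n : Type*} [Fintype n] [DecidableEq n] {A : Matrix n n 𝕜}

theorem map_eigenvalues_eq_of_charpoly_eq (hA : A.IsHermitian) {s : Multiset ℝ}
    (h : A.charpoly = (s.map fun a : ℝ => X - C (a : 𝕜)).prod) :
    Finset.univ.val.map hA.eigenvalues = s := by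
  apply Multiset.map_injective (RCLike.ofReal_injective (K := 𝕜))
  rw [Multiset.map_map, ← roots_charpoly_eq_eigenvalues, h,
    ← roots_multiset_prod_X_sub_C (s.map RCLike.ofReal), Multiset.map_map]
  rfl

theorem map_eigenvalues_smul (hA : A.IsHermitian) (c : ℝ) (hcA : (c • A).IsHermitian) :
    Finset.univ.val.map hcA.eigenvalues = Finset.univ.val.map fun j => c * hA.eigenvalues j := by
  apply hcA.map_eigenvalues_eq_of_charpoly_eq
  conv_lhs => rw [hA.spectral_theorem, Unitary.conjStarAlgAut_apply, ← smul_mul_assoc,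
    ← mul_smul_comm, charpoly_mul_comm, ← mul_assoc]
  rw [Unitary.star_mul_self_of_mem hA.eigenvectorUnitary.2, one_mul, ← diagonal_smul,
    charpoly_diagonal, Multiset.map_map]
  exact Finset.prod_congr rfl fun j _ => by simp [RCLike.real_smul_eq_coe_mul]

end

section
variable {ι : Type*} [Fintype ι] [DecidableEq ι] {n : ι → Type*} [∀ i, Fintype (n i)]
  [∀ i, DecidableEq (n i)]

theorem map_eigenvalues_blockDiagonal' {A : ∀ i, Matrix (n i) (n i) 𝕜}
    (hA : ∀ i, (A i).IsHermitian) (hB : (blockDiagonal' A).IsHermitian) :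
    Finset.univ.val.map hB.eigenvalues =
      Finset.univ.val.bind fun i => Finset.univ.val.map (hA i).eigenvalues := by
  apply hB.map_eigenvalues_eq_of_charpoly_eq
  rw [charpoly_blockDiagonal', Multiset.map_bind, Multiset.prod_bind]
  exact Finset.prod_congr rfl fun i _ => by rw [(hA i).charpoly_eq, Multiset.map_map]; rfl

theorem sum_comp_eigenvalues_blockDiagonal'_smul {A : ∀ i, Matrix (n i) (n i) 𝕜}
    (hA : ∀ i, (A i).IsHermitian) (c : ι → ℝ)
    (hB : (blockDiagonal' fun i => c i • A i).IsHermitian) (f : ℝ → ℝ) :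
    ∑ k, f (hB.eigenvalues k) = ∑ i, ∑ j, f (c i * (hA i).eigenvalues j) := by
  have hcA : ∀ i, (c i • A i).IsHermitian := fun i => (hA i).smul (IsSelfAdjoint.all (c i))
  calc ∑ k, f (hB.eigenvalues k) = ((Finset.univ.val.map hB.eigenvalues).map f).sum := by
        rw [Multiset.map_map]; rfl
    _ = ∑ i, ∑ j, f (c i * (hA i).eigenvalues j) := by
        simp_rw [hB.map_eigenvalues_blockDiagonal' hcA, Multiset.map_bind, Multiset.sum_bind,
          (hA _).map_eigenvalues_smul _ (hcA _), Multiset.map_map]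
        rfl

end

end IsHermitian
end Matrix

namespace Real

theorem neg_sum_mul_log_eq_sum_negMulLog {ι : Type*} (s : Finset ι) (f : ι → ℝ) :
    -∑ i ∈ s, f i * log (f i) = ∑ i ∈ s, negMulLog (f i) := by
  simp [negMulLog, Finset.sum_neg_distrib]

theorem sum_sum_negMulLog_mul {ι : Type*} {κ : ι → Type*} [Fintype ι] [∀ i, Fintype (κ i)]
    (p : ι → ℝ) (q : ∀ i, κ i → ℝ) (hq : ∀ i, ∑ j, q i j = 1) :
    ∑ i, ∑ j, negMulLog (p i * q i j) =
      ∑ i, negMulLog (p i) + ∑ i, p i * ∑ j, negMulLog (q i j) := by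
  simp_rw [negMulLog_mul, Finset.sum_add_distrib, ← Finset.sum_mul, ← Finset.mul_sum, hq, one_mul]

end Real

theorem vendi_score_partitioning_general
    {m : ℕ} (ν : Fin m → ℕ) (M : (i : Fin m) → Matrix (Fin (ν i)) (Fin (ν i)) ℝ)
    (hM : ∀ i, (M i).PosSemidef) (htr : ∀ i, (M i).trace = 1)
    (p : Fin m → ℝ)
    (hB : (Matrix.blockDiagonal' (fun i => p i • M i)).IsHermitian) :
    Real.exp (-∑ k, hB.eigenvalues k * Real.log (hB.eigenvalues k)) =
      Real.exp (-∑ i, p i * Real.log (p i)) *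
        ∏ i, (Real.exp
            (-∑ j, (hM i).1.eigenvalues j * Real.log ((hM i).1.eigenvalues j))) ^ (p i) := by
  have hsum : ∀ i, ∑ j, (hM i).1.eigenvalues j = 1 := fun i => by
    simpa using ((hM i).1.trace_eq_sum_eigenvalues).symm.trans (htr i)
  rw [Real.neg_sum_mul_log_eq_sum_negMulLog, Real.neg_sum_mul_log_eq_sum_negMulLog,
    IsHermitian.sum_comp_eigenvalues_blockDiagonal'_smul (fun i => (hM i).1) p hB,
    Real.sum_sum_negMulLog_mul _ _ hsum, Real.exp_add]
  congr 1
  rw [Real.exp_sum]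
  refine Finset.prod_congr rfl fun i _ => ?_
  rw [Real.neg_sum_mul_log_eq_sum_negMulLog, ← Real.exp_mul, mul_comm]

/-- Partitioning identity for the Vendi Score: for a block-diagonal PSD
matrix with blocks `p i • M i` (each `M i` PSD with unit trace, `p` a probability vector),
the Vendi Score of the combined matrix equals `exp (H p)` times the `p`-weighted geometric
mean of the blocks' Vendi Scores. -/
theorem vendi_score_partitioning
    {m : ℕ} (ν : Fin m → ℕ) (M : (i : Fin m) → Matrix (Fin (ν i)) (Fin (ν i)) ℝ)
    (hM : ∀ i, (M i).PosSemidef) (htr : ∀ i, (M i).trace = 1)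
    (p : Fin m → ℝ) (hp : ∀ i, 0 ≤ p i) (hpsum : ∑ i, p i = 1)
    (hB : (Matrix.blockDiagonal' (fun i => p i • M i)).IsHermitian) :
    Real.exp (-∑ k, hB.eigenvalues k * Real.log (hB.eigenvalues k)) =
      Real.exp (-∑ i, p i * Real.log (p i)) *
        ∏ i, (Real.exp
            (-∑ j, (hM i).1.eigenvalues j * Real.log ((hM i).1.eigenvalues j))) ^ (p i) :=
  vendi_score_partitioning_general ν M hM htr p hB
end
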